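/- Let x_η denote the R_η-minimizing solution of Kx = y†. For every η ≥ 0, if η_n ≥ 0 and η_n → η then x_{η_n} → x_η strongly in ℓ²; moreover the value function η ↦ η‖x_η‖_{ℓ¹} + (1/2)‖x_η‖_{ℓ²}² is differentiable with derivative equal to ‖x_η‖_{ℓ¹}. -/

import Mathlib

noncomputable section

open Filter Topology

/-- `ℓ²(ℕ, ℝ)`. -/
abbrev ltwo : Type := lp (fun _ : ℕ => ℝ) 2

/-- `x ∈ ℓ¹`. -/
def inL1 (x : ltwo) : Prop := Memℓp (fun i => x i) 1

/-- The `ℓ¹`-norm `‖x‖_{ℓ¹} = ∑ |xᵢ|` (junk value if `x ∉ ℓ¹`). -/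
noncomputable def l1norm (x : ltwo) : ℝ := ∑' i, |x i|

/-- The functional `R_η(x) = η‖x‖₁ + ½‖x‖₂²` (finite on `ℓ¹ ∩ ℓ²`). -/
noncomputable def Rfun (η : ℝ) (x : ltwo) : ℝ := η * l1norm x + (1 / 2) * ‖x‖ ^ 2

/-- `x†` is the `R_η`-minimizing solution of `Kx = y†`: it solves the equation and
minimizes `R_η` among all solutions in `ℓ¹ ∩ ℓ²`. -/
def IsRMinSolution {H : Type*} [NormedAddCommGroup H] [InnerProductSpace ℝ H]
    (K : ltwo →L[ℝ] H) (ydag : H) (η : ℝ) (xdag : ltwo) : Prop :=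
  inL1 xdag ∧ K xdag = ydag ∧
    ∀ z : ltwo, inL1 z → K z = ydag → Rfun η xdag ≤ Rfun η z

/-!
Write `V(t) = R_t(x_t)`. Strong convexity of `R_η` on the convex solution set gives
`R_a(x_a) + ¼‖x_b - x_a‖² ≤ R_a(x_b)`; adding the minimality `R_b(x_b) ≤ R_b(x_a)` yields
`¼‖x_b - x_a‖² ≤ (a - b)(‖x_b‖₁ - ‖x_a‖₁)`. Hence `η ↦ ‖x_η‖₁` is antitone and `η ↦ x_η` is
`½`-Hölder. Lower semicontinuity of `‖·‖₁` bounds `‖x_t‖₁` from below near `η`, and minimality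
of `x_t` against `x_η` bounds it from above, so `η ↦ ‖x_η‖₁` is continuous. Finally the two
minimality inequalities read `(t - η)‖x_t‖₁ ≤ V(t) - V(η) ≤ (t - η)‖x_η‖₁`, which squeezes the
difference quotients of `V` at `η` to `‖x_η‖₁`.
-/

section Regularization

variable {E : Type*} [NormedAddCommGroup E] {f : E → ℝ} {s : Set E}

def regObjective (f : E → ℝ) (η : ℝ) (z : E) : ℝ := η * f z + 1 / 2 * ‖z‖ ^ 2

def IsRegMinimizerPath (f : E → ℝ) (s : Set E) (x : ℝ → E) : Prop :=
  ∀ η, 0 ≤ η → x η ∈ s ∧ IsMinOn (regObjective f η) s (x η)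

namespace IsRegMinimizerPath

variable {x : ℝ → E} (hx : IsRegMinimizerPath f s x)
include hx

lemma regObjective_le {a b : ℝ} (ha : 0 ≤ a) (hb : 0 ≤ b) :
    regObjective f a (x a) ≤ regObjective f a (x b) :=
  (hx a ha).2 (hx b hb).1

lemma comp_le_add_div {η t : ℝ} (hη : 0 ≤ η) (ht : 0 < t) :
    f (x t) ≤ f (x η) + (‖x η‖ ^ 2 - ‖x t‖ ^ 2) / (2 * t) := by
  have hmin := hx.regObjective_le ht.le hη
  unfold regObjective at hmin
  rw [← sub_le_iff_le_add', le_div_iff₀ (by positivity)]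
  linarith

lemma abs_slope_sub_le {η t : ℝ} (hη : 0 ≤ η) (ht : 0 ≤ t) (hne : t ≠ η) :
    |slope (fun t => regObjective f t (x t)) η t - f (x η)| ≤ |f (x t) - f (x η)| := by
  have hupper := hx.regObjective_le ht hη
  have hlower := hx.regObjective_le hη ht
  have hd : t - η ≠ 0 := sub_ne_zero.2 hne
  set N := regObjective f t (x t) - regObjective f η (x η) - (t - η) * f (x η)
  have hN : (t - η) * (f (x t) - f (x η)) ≤ N ∧ N ≤ 0 := by
    unfold N regObjective at *
    constructor <;> linarith
  have hslope : slope (fun t => regObjective f t (x t)) η t - f (x η) = N / (t - η) := by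
    rw [slope_def_field]
    field_simp
    ring
  rw [hslope, abs_div, div_le_iff₀ (abs_pos.2 hd), abs_of_nonpos hN.2, mul_comm, ← abs_mul]
  linarith [neg_abs_le ((t - η) * (f (x t) - f (x η)))]

lemma hasDerivWithinAt {η : ℝ} (hη : 0 ≤ η) (hcont : ContinuousWithinAt (f ∘ x) (Set.Ici 0) η) :
    HasDerivWithinAt (fun t => regObjective f t (x t)) (f (x η)) (Set.Ici 0) η := by
  rw [hasDerivWithinAt_iff_tendsto_slope, tendsto_iff_norm_sub_tendsto_zero]
  refine squeeze_zero' (.of_forall fun _ => norm_nonneg _) ?_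
    ((tendsto_iff_norm_sub_tendsto_zero.1 hcont).mono_left (nhdsWithin_mono _ Set.sdiff_subset))
  filter_upwards [self_mem_nhdsWithin] with t ht
  exact hx.abs_slope_sub_le hη ht.1 ht.2

end IsRegMinimizerPath

variable [InnerProductSpace ℝ E]

lemma norm_midpoint_sq (x z : E) :
    ‖(1 / 2 : ℝ) • x + (1 / 2 : ℝ) • z‖ ^ 2 = ‖x‖ ^ 2 / 2 + ‖z‖ ^ 2 / 2 - ‖z - x‖ ^ 2 / 4 := by
  have hpar := parallelogram_law_with_norm ℝ x z
  rw [← smul_add, norm_smul, Real.norm_of_nonneg (by norm_num), norm_sub_rev]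
  linarith

lemma IsMinOn.regObjective_add_sq_le {η : ℝ} {x z : E} (hs : Convex ℝ s) (hf : ConvexOn ℝ s f)
    (hη : 0 ≤ η) (hx : x ∈ s) (hmin : IsMinOn (regObjective f η) s x) (hz : z ∈ s) :
    regObjective f η x + ‖z - x‖ ^ 2 / 4 ≤ regObjective f η z := by
  have hm : (1 / 2 : ℝ) • x + (1 / 2 : ℝ) • z ∈ s := hs hx hz (by norm_num) (by norm_num) (by norm_num)
  have hfm : f ((1 / 2 : ℝ) • x + (1 / 2 : ℝ) • z) ≤ 1 / 2 * f x + 1 / 2 * f z :=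
    hf.2 hx hz (by norm_num) (by norm_num) (by norm_num)
  have hxm : regObjective f η x ≤ regObjective f η ((1 / 2 : ℝ) • x + (1 / 2 : ℝ) • z) := hmin hm
  unfold regObjective at hxm ⊢
  rw [norm_midpoint_sq] at hxm
  nlinarith [mul_le_mul_of_nonneg_left hfm hη]

namespace IsRegMinimizerPath

variable {x : ℝ → E} (hx : IsRegMinimizerPath f s x)
include hx

lemma sq_norm_sub_le_mul_sub (hs : Convex ℝ s) (hf : ConvexOn ℝ s f) {a b : ℝ} (ha : 0 ≤ a)
    (hb : 0 ≤ b) : ‖x b - x a‖ ^ 2 / 4 ≤ (a - b) * (f (x b) - f (x a)) := by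
  have hgrowth := (hx a ha).2.regObjective_add_sq_le hs hf ha (hx a ha).1 (hx b hb).1
  have hmin := hx.regObjective_le hb ha
  unfold regObjective at hgrowth hmin
  linarith

lemma antitoneOn_comp (hs : Convex ℝ s) (hf : ConvexOn ℝ s f) :
    AntitoneOn (f ∘ x) (Set.Ici 0) := by
  intro a ha b _ hab
  have h := hx.sq_norm_sub_le_mul_sub hs hf ha (le_trans ha hab)
  rcases hab.eq_or_lt with rfl | hlt
  · rfl
  · show f (x b) ≤ f (x a)
    nlinarith [sq_nonneg ‖x b - x a‖]

lemma sq_norm_sub_le (hs : Convex ℝ s) (hf : ConvexOn ℝ s f) (hf₀ : ∀ z ∈ s, 0 ≤ f z) {a b : ℝ}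
    (ha : 0 ≤ a) (hb : 0 ≤ b) : ‖x b - x a‖ ^ 2 ≤ 4 * f (x 0) * |b - a| := by
  have hdiff : |f (x b) - f (x a)| ≤ f (x 0) := by
    have hanti := hx.antitoneOn_comp hs hf
    have h0a : f (x a) ≤ f (x 0) := hanti Set.self_mem_Ici ha ha
    have h0b : f (x b) ≤ f (x 0) := hanti Set.self_mem_Ici hb hb
    rw [abs_le]
    constructor <;> linarith [hf₀ _ (hx a ha).1, hf₀ _ (hx b hb).1]
  calc ‖x b - x a‖ ^ 2 ≤ 4 * ((a - b) * (f (x b) - f (x a))) := by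
        linarith [hx.sq_norm_sub_le_mul_sub hs hf ha hb]
    _ ≤ 4 * (|a - b| * f (x 0)) := by
        refine mul_le_mul_of_nonneg_left ?_ (by norm_num)
        calc (a - b) * (f (x b) - f (x a)) ≤ |a - b| * |f (x b) - f (x a)| :=
              (le_abs_self _).trans (abs_mul _ _).le
          _ ≤ |a - b| * f (x 0) := by gcongr
    _ = 4 * f (x 0) * |b - a| := by rw [abs_sub_comm]; ring

lemma continuousOn (hs : Convex ℝ s) (hf : ConvexOn ℝ s f) (hf₀ : ∀ z ∈ s, 0 ≤ f z) :
    ContinuousOn x (Set.Ici 0) := by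
  intro η hη
  have hbound : Continuous fun t => √(4 * f (x 0) * |t - η|) := by fun_prop
  refine tendsto_iff_norm_sub_tendsto_zero.2 <| squeeze_zero' (.of_forall fun _ => norm_nonneg _)
    ?_ (by simpa only [sub_self, abs_zero, mul_zero, Real.sqrt_zero] using
      (hbound.tendsto η).mono_left nhdsWithin_le_nhds)
  filter_upwards [self_mem_nhdsWithin] with t ht
  exact Real.le_sqrt_of_sq_le (hx.sq_norm_sub_le hs hf hf₀ hη ht)

lemma continuousOn_comp (hs : Convex ℝ s) (hf : ConvexOn ℝ s f) (hf₀ : ∀ z ∈ s, 0 ≤ f z)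
    (hlsc : LowerSemicontinuousOn f s) : ContinuousOn (f ∘ x) (Set.Ici 0) := by
  intro η hη
  have hxη : Tendsto x (𝓝[Set.Ici 0] η) (𝓝 (x η)) := hx.continuousOn hs hf hf₀ η hη
  refine tendsto_order.2 ⟨fun a ha => ?_, fun a ha => ?_⟩
  · have hxs : Tendsto x (𝓝[Set.Ici 0] η) (𝓝[s] (x η)) :=
      tendsto_nhdsWithin_iff.2 ⟨hxη, eventually_nhdsWithin_of_forall fun t ht => (hx t ht).1⟩
    exact hxs.eventually (hlsc (x η) (hx η hη).1 a ha)
  rcases (Set.mem_Ici.1 hη).eq_or_lt with rfl | hpos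
  · filter_upwards [self_mem_nhdsWithin] with t ht
    exact (hx.antitoneOn_comp hs hf Set.self_mem_Ici ht ht).trans_lt ha
  · have hbound : Tendsto (fun t => f (x η) + (‖x η‖ ^ 2 - ‖x t‖ ^ 2) / (2 * t))
        (𝓝[Set.Ici 0] η) (𝓝 (f (x η) + (‖x η‖ ^ 2 - ‖x η‖ ^ 2) / (2 * η))) :=
      tendsto_const_nhds.add ((tendsto_const_nhds.sub (hxη.norm.pow 2)).div
        ((tendsto_id.mono_left nhdsWithin_le_nhds).const_mul 2) (by positivity))
    rw [sub_self, zero_div, add_zero] at hbound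
    filter_upwards [hbound.eventually (gt_mem_nhds ha),
      nhdsWithin_le_nhds (lt_mem_nhds (half_lt_self hpos))] with t hlt ht
    exact (hx.comp_le_add_div hη (by linarith)).trans_lt hlt

end IsRegMinimizerPath

end Regularization

lemma inL1.summable_abs {x : ltwo} (hx : inL1 x) : Summable fun i => |x i| := by
  simpa [Real.norm_eq_abs] using hx.summable (p := 1) (by norm_num)

lemma l1norm_nonneg (x : ltwo) : 0 ≤ l1norm x := tsum_nonneg fun _ => abs_nonneg _

lemma convex_setOf_inL1 : Convex ℝ {x : ltwo | inL1 x} := by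
  intro x hx z hz a b _ _ _
  exact (hx.const_smul a).add (hz.const_smul b)

lemma convexOn_l1norm : ConvexOn ℝ {x : ltwo | inL1 x} l1norm := by
  refine ⟨convex_setOf_inL1, fun x hx z hz a b ha hb hab => ?_⟩
  have hpt : ∀ i, |(a • x + b • z) i| ≤ a * |x i| + b * |z i| := fun i => by
    simpa only [lp.coeFn_add, lp.coeFn_smul, Pi.add_apply, Pi.smul_apply, smul_eq_mul, abs_mul,
      abs_of_nonneg ha, abs_of_nonneg hb] using abs_add_le (a * x i) (b * z i)
  have hsx := (inL1.summable_abs hx).mul_left a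
  have hsz := (inL1.summable_abs hz).mul_left b
  calc l1norm (a • x + b • z) ≤ ∑' i, (a * |x i| + b * |z i|) :=
        (inL1.summable_abs (convex_setOf_inL1 hx hz ha hb hab)).tsum_le_tsum hpt (hsx.add hsz)
    _ = a • l1norm x + b • l1norm z := by
        rw [hsx.tsum_add hsz, tsum_mul_left, tsum_mul_left]
        rfl

lemma lowerSemicontinuousOn_l1norm : LowerSemicontinuousOn l1norm {x : ltwo | inL1 x} := by
  intro x hx y hy
  obtain ⟨N, hN⟩ : ∃ N, y < ∑ i ∈ Finset.range N, |x i| :=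
    ((inL1.summable_abs hx).hasSum.tendsto_sum_nat.eventually (lt_mem_nhds hy)).exists
  have hcont : Continuous fun z : ltwo => ∑ i ∈ Finset.range N, |z i| := by
    have hcoord (i : ℕ) : Continuous fun z : ltwo => z i :=
      (lp.evalCLM ℝ (fun _ : ℕ => ℝ) 2 i).continuous
    exact continuous_finsetSum _ fun i _ => (hcoord i).abs
  filter_upwards [nhdsWithin_le_nhds ((hcont.tendsto x).eventually (lt_mem_nhds hN)),
    self_mem_nhdsWithin] with z hz hzL1
  exact hz.trans_le ((inL1.summable_abs hzL1).sum_le_tsum _ fun i _ => abs_nonneg _)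

lemma convex_setOf_inL1_and_eq {H : Type*} [NormedAddCommGroup H] [NormedSpace ℝ H]
    (K : ltwo →L[ℝ] H) (ydag : H) : Convex ℝ {z : ltwo | inL1 z ∧ K z = ydag} :=
  convex_setOf_inL1.inter ((convex_singleton ydag).linear_preimage K.toLinearMap)

-- `Rfun η` unfolds to `regObjective l1norm η`.
lemma isRegMinimizerPath_of_isRMinSolution {H : Type*} [NormedAddCommGroup H]
    [InnerProductSpace ℝ H] {K : ltwo →L[ℝ] H} {ydag : H} {xsol : ℝ → ltwo}
    (hxsol : ∀ η : ℝ, 0 ≤ η → IsRMinSolution K ydag η (xsol η)) :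
    IsRegMinimizerPath l1norm {z : ltwo | inL1 z ∧ K z = ydag} xsol :=
  fun η hη => ⟨⟨(hxsol η hη).1, (hxsol η hη).2.1⟩, fun z hz => (hxsol η hη).2.2 z hz.1 hz.2⟩

/-- Continuity of `η ↦ x_η` on `[0,∞)` and differentiability of the value function
`η ↦ η‖x_η‖₁ + ½‖x_η‖₂²`, whose derivative (within `[0,∞)`) equals `‖x_η‖₁`. -/
theorem RMinSolution_continuous_and_value_differentiable
    {H : Type*} [NormedAddCommGroup H] [InnerProductSpace ℝ H]
    (K : ltwo →L[ℝ] H) (ydag : H)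
    (xsol : ℝ → ltwo) (hxsol : ∀ η : ℝ, 0 ≤ η → IsRMinSolution K ydag η (xsol η)) :
    (∀ η : ℝ, 0 ≤ η → ∀ ηs : ℕ → ℝ, (∀ n, 0 ≤ ηs n) →
      Tendsto ηs atTop (nhds η) →
        Tendsto (fun n => xsol (ηs n)) atTop (nhds (xsol η))) ∧
    (∀ η : ℝ, 0 ≤ η →
      HasDerivWithinAt (fun t : ℝ => t * l1norm (xsol t) + (1 / 2) * ‖xsol t‖ ^ 2)
        (l1norm (xsol η)) (Set.Ici 0) η) := by
  have hS := convex_setOf_inL1_and_eq K ydag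
  have hpath := isRegMinimizerPath_of_isRMinSolution hxsol
  have hconv : ConvexOn ℝ {z : ltwo | inL1 z ∧ K z = ydag} l1norm :=
    convexOn_l1norm.subset (fun _ hz => hz.1) hS
  have hnonneg : ∀ z ∈ {z : ltwo | inL1 z ∧ K z = ydag}, 0 ≤ l1norm z :=
    fun z _ => l1norm_nonneg z
  have hxcont := hpath.continuousOn hS hconv hnonneg
  have hl1cont := hpath.continuousOn_comp hS hconv hnonneg
    (lowerSemicontinuousOn_l1norm.mono fun _ hz => hz.1)
  refine ⟨fun η hη ηs hηs hlim => ?_, fun η hη => hpath.hasDerivWithinAt hη (hl1cont η hη)⟩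
  exact (hxcont η hη).tendsto.comp (tendsto_nhdsWithin_iff.2 ⟨hlim, .of_forall hηs⟩)
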